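/- Define h(y₁, y₂, y₃) = 1 − max(y₁/3 + y₂/3 + y₃/3 − 1/2, 0) on [0,1]³. Then h has infinite variation in the sense of Vitali: for every even positive integer n, the cubes of edge 1/n whose vertex indices satisfy i₁ + i₂ + i₃ = (3/2)n − 2 each contribute 1/(3n) to the Vitali variation sum, and there are at least c·n² such cubes for a positive constant c, so the total variation is at least c·n/3, which tends to infinity. -/

import Mathlib

/-!
`preintCube y` depends only on `y₁ + y₂ + y₃`, so its alternating vertex sum over a cube of
edge `δ` is the third finite difference of the ramp `t ↦ (t / 3 - 1 / 2)₊` with step `δ`. When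
the kink `t = 3 / 2` sits at the third of the four levels, only the top level sees the ramp and
the difference is `-δ / 3`. On the grid of mesh `1 / n` (`n` even) these are the cubes with
index sum `3n / 2 - 2`; a two-parameter family of them shows there are at least `n² / 16`, so
the Vitali sum over them is at least `n / 48`.
-/

open Filter

/-- The 3-dimensional alternating vertex sum of `h` over the box
`[a₁,b₁] × [a₂,b₂] × [a₃,b₃]`. -/
def altSum3 (h : ℝ → ℝ → ℝ → ℝ) (a₁ a₂ a₃ b₁ b₂ b₃ : ℝ) : ℝ :=
  h b₁ b₂ b₃ - h a₁ b₂ b₃ - h b₁ a₂ b₃ - h b₁ b₂ a₃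
    + h a₁ a₂ b₃ + h a₁ b₂ a₃ + h b₁ a₂ a₃ - h a₁ a₂ a₃

/-- The preintegrated function `h(y) = 1 - (y₁/3 + y₂/3 + y₃/3 - 1/2)₊`. -/
noncomputable def preintCube (y₁ y₂ y₃ : ℝ) : ℝ :=
  1 - max (y₁ / 3 + y₂ / 3 + y₃ / 3 - 1 / 2) 0

theorem altSum3_comp_add (F : ℝ → ℝ) (a₁ a₂ a₃ δ : ℝ) :
    altSum3 (fun y₁ y₂ y₃ => F (y₁ + y₂ + y₃)) a₁ a₂ a₃ (a₁ + δ) (a₂ + δ) (a₃ + δ) =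
      F (a₁ + a₂ + a₃ + 3 * δ) - 3 * F (a₁ + a₂ + a₃ + 2 * δ)
        + 3 * F (a₁ + a₂ + a₃ + δ) - F (a₁ + a₂ + a₃) := by
  simp only [altSum3]
  ring_nf

theorem altSum3_preintCube_of_add_eq {a₁ a₂ a₃ δ : ℝ} (hδ : 0 ≤ δ)
    (hs : a₁ + a₂ + a₃ + 2 * δ = 3 / 2) :
    altSum3 preintCube a₁ a₂ a₃ (a₁ + δ) (a₂ + δ) (a₃ + δ) = -(δ / 3) := by
  have hF : preintCube = fun y₁ y₂ y₃ => 1 - max ((y₁ + y₂ + y₃) / 3 - 1 / 2) 0 := by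
    ext; simp only [preintCube]; ring_nf
  rw [hF, altSum3_comp_add (fun t => 1 - max (t / 3 - 1 / 2) 0),
    max_eq_left (by linarith : (0:ℝ) ≤ (a₁ + a₂ + a₃ + 3 * δ) / 3 - 1 / 2),
    max_eq_right (by linarith : (a₁ + a₂ + a₃ + 2 * δ) / 3 - 1 / 2 ≤ 0),
    max_eq_right (by linarith : (a₁ + a₂ + a₃ + δ) / 3 - 1 / 2 ≤ 0),
    max_eq_right (by linarith : (a₁ + a₂ + a₃) / 3 - 1 / 2 ≤ 0)]
  linarith

theorem abs_altSum3_preintCube_grid {n i₁ i₂ i₃ : ℕ} (hn : 0 < n)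
    (h : 2 * (i₁ + i₂ + i₃ + 2) = 3 * n) :
    |altSum3 preintCube ((i₁ : ℝ) / n) ((i₂ : ℝ) / n) ((i₃ : ℝ) / n)
      (((i₁ : ℝ) + 1) / n) (((i₂ : ℝ) + 1) / n) (((i₃ : ℝ) + 1) / n)| = 1 / (3 * n) := by
  have hn' : (0 : ℝ) < n := by exact_mod_cast hn
  have hs : (2 : ℝ) * (i₁ + i₂ + i₃ + 2) = 3 * n := by exact_mod_cast h
  simp only [add_div _ (1 : ℝ)]
  rw [altSum3_preintCube_of_add_eq (by positivity), abs_neg, abs_of_nonneg (by positivity)]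
  · ring
  · field_simp
    linarith

def kinkCubes (n : ℕ) : Finset (ℕ × ℕ × ℕ) :=
  (Finset.range n ×ˢ Finset.range n ×ˢ Finset.range n).filter
    (fun p => 2 * (p.1 + p.2.1 + p.2.2 + 2) = 3 * n)

theorem sq_le_card_kinkCubes {m : ℕ} (hm : 0 < m) :
    (m / 2 + 1) ^ 2 ≤ (kinkCubes (2 * m)).card := by
  rw [sq, ← Finset.card_range (m / 2 + 1), ← Finset.card_product]
  refine Finset.card_le_card_of_injOn (fun q => (m - 1 + q.1, m - 1 + q.2, m - q.1 - q.2))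
    ?_ ?_
  · rintro ⟨a, b⟩ hab
    simp only [Finset.coe_product, Set.mem_prod, Finset.mem_coe, Finset.mem_range] at hab
    simp only [kinkCubes, Finset.mem_coe, Finset.mem_filter, Finset.mem_product,
      Finset.mem_range]
    omega
  · rintro ⟨a, b⟩ hab ⟨a', b'⟩ hab' heq
    simp only [Prod.mk.injEq] at heq ⊢
    omega

theorem sq_div_le_card_kinkCubes {n : ℕ} (hev : Even n) (hn : 0 < n) :
    (n : ℝ) ^ 2 / 16 ≤ (kinkCubes n).card := by
  obtain ⟨m, rfl⟩ := hev
  rw [← two_mul] at hn ⊢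
  have hcard : (((m / 2 + 1) ^ 2 : ℕ) : ℝ) ≤ (kinkCubes (2 * m)).card :=
    Nat.cast_le.mpr (sq_le_card_kinkCubes (by omega))
  have hm : ((2 * m : ℕ) : ℝ) ≤ 4 * ((m / 2 + 1 : ℕ) : ℝ) := by
    exact_mod_cast (by omega : 2 * m ≤ 4 * (m / 2 + 1))
  push_cast at hcard hm ⊢
  nlinarith [Nat.cast_nonneg (α := ℝ) m]

theorem sum_abs_altSum3_kinkCubes {n : ℕ} (hn : 0 < n) :
    ∑ p ∈ kinkCubes n,
        |altSum3 preintCube ((p.1 : ℝ) / n) ((p.2.1 : ℝ) / n) ((p.2.2 : ℝ) / n)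
          (((p.1 : ℝ) + 1) / n) (((p.2.1 : ℝ) + 1) / n) (((p.2.2 : ℝ) + 1) / n)| =
      (kinkCubes n).card / (3 * n) := by
  rw [Finset.sum_congr rfl fun p hp =>
      abs_altSum3_preintCube_grid hn (Finset.mem_filter.mp (id hp : p ∈ kinkCubes n)).2,
    Finset.sum_const, nsmul_eq_mul, mul_one_div]

/-- `h(y) = 1 - (y₁/3+y₂/3+y₃/3-1/2)₊` has infinite Vitali variation on `[0,1]³`:
for every even positive `n`, each cube of edge `1/n` with vertex indices satisfying
`i₁+i₂+i₃ = 3n/2 - 2` contributes `1/(3n)` to the Vitali variation sum, there are at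
least `c·n²` such cubes for a positive constant `c`, so the total contribution is at
least `c·n/3`, which tends to infinity. -/
theorem stmt_6 :
    ∃ c : ℝ, 0 < c ∧
      (∀ n : ℕ, Even n → 0 < n →
        (∀ i₁ i₂ i₃ : ℕ, i₁ < n → i₂ < n → i₃ < n → 2 * (i₁ + i₂ + i₃ + 2) = 3 * n →
          |altSum3 preintCube ((i₁ : ℝ) / n) ((i₂ : ℝ) / n) ((i₃ : ℝ) / n)
            (((i₁ : ℝ) + 1) / n) (((i₂ : ℝ) + 1) / n) (((i₃ : ℝ) + 1) / n)|
            = 1 / (3 * n)) ∧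
        c * (n : ℝ) ^ 2 ≤
          (((Finset.range n ×ˢ Finset.range n ×ˢ Finset.range n).filter
            (fun p : ℕ × ℕ × ℕ => 2 * (p.1 + p.2.1 + p.2.2 + 2) = 3 * n)).card : ℝ) ∧
        c * (n : ℝ) / 3 ≤
          ∑ p ∈ (Finset.range n ×ˢ Finset.range n ×ˢ Finset.range n).filter
              (fun p : ℕ × ℕ × ℕ => 2 * (p.1 + p.2.1 + p.2.2 + 2) = 3 * n),
            |altSum3 preintCube ((p.1 : ℝ) / n) ((p.2.1 : ℝ) / n) ((p.2.2 : ℝ) / n)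
              (((p.1 : ℝ) + 1) / n) (((p.2.1 : ℝ) + 1) / n) (((p.2.2 : ℝ) + 1) / n)|) ∧
      Tendsto (fun n : ℕ => c * (n : ℝ) / 3) atTop atTop := by
  refine ⟨1 / 16, by norm_num, fun n hev hn => ?_, ?_⟩
  · have hcard := sq_div_le_card_kinkCubes hev hn
    have hn' : (0 : ℝ) < n := by exact_mod_cast hn
    refine ⟨fun i₁ i₂ i₃ _ _ _ h => abs_altSum3_preintCube_grid hn h,
      by rw [← kinkCubes]; linarith, ?_⟩
    rw [← kinkCubes, sum_abs_altSum3_kinkCubes hn, le_div_iff₀ (by positivity)]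
    nlinarith
  · exact (tendsto_natCast_atTop_atTop.const_mul_atTop (by norm_num)).atTop_div_const
      (by norm_num)
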